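/- arXiv:2107.11154 — 4 statements merged into one kernel-verified Lean document; each statement's English description precedes it below -/
import Mathlib

section
/- Averaging lemma for oscillatory sums: Let (γ_n) and (a_n) be positive sequences with γ_n → ∞ and Σ √γ_n / a_n = ∞, and suppose the sequence (γ_n/a_n) has bounded variation, i.e. Σ_n |γ_{n+1}/a_{n+1} − γ_n/a_n| < ∞. Let K ⊂ ℝ^d be compact, and (ξ_n) real functions on K with √γ_n·ξ_n → ψ uniformly on K, where ψ : K → ℝ satisfies c⁻¹ ≤ ψ ≤ c for some c > 0. Set Ξ_n = Σ_{j=0}^n ξ_j and Δ_n = Σ_{j=0}^n √γ_j/a_j. Then (1/Δ_n)·Σ_{k=0}^n (√γ_k/a_k)·cos(Ξ_k(x)) → 0 uniformly in x ∈ K. -/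
open Finset Filter Real Topology

/-!
Write `b k = √(γ k) / a k`, `r k = γ k / a k` and `Ξ k = ∑ j ≤ k, ξ j`. Since `√(γ k) * ξ k ≈ ψ`
and `ξ k → 0`, up to an error `o(b k)` uniformly on `K` the term `b k * cos (Ξ k)` equals
`ψ⁻¹ * r k * (sin (Ξ k) - sin (Ξ (k - 1)))`, i.e. `ψ⁻¹ * r k` times the integral of `cos` over
`[Ξ (k - 1), Ξ k]`. Summation by parts bounds the sum of these main terms by
`2 c (|r 0| + ∑ |r (k + 1) - r k|)`, finite because `r` has bounded variation, while the errors
sum to `o(Δ n)`. Dividing by `Δ n → ∞` gives the claim.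
-/

theorem abs_sub_mul_cos_sub_sin_sub_sin_le (s t : ℝ) :
    |(t - s) * cos t - (sin t - sin s)| ≤ (t - s) ^ 2 := by
  have hint : (t - s) * cos t - (sin t - sin s) = ∫ x in s..t, (cos t - cos x) := by
    rw [intervalIntegral.integral_sub intervalIntegrable_const
      (continuous_cos.intervalIntegrable _ _), intervalIntegral.integral_const, integral_cos,
      smul_eq_mul]
  have hbound : ∀ x ∈ Set.uIoc s t, ‖cos t - cos x‖ ≤ |t - s| := fun x hx => by
    have := Real.dist_le_of_mem_uIcc (Set.uIoc_subset_uIcc hx) (Set.right_mem_uIcc (a := s))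
    rw [Real.dist_eq, Real.dist_eq, abs_sub_comm x, abs_sub_comm s] at this
    exact (abs_cos_sub_cos_le t x).trans this
  rw [hint, ← sq_abs, sq]
  exact intervalIntegral.norm_integral_le_of_norm_le_const hbound

theorem abs_div_mul_cos_sub_inv_mul_sin_sub_sin_le {σ a p : ℝ} (hσ : 0 < σ) (ha : 0 ≤ a)
    (hp : 0 < p) (A e : ℝ) :
    |σ / a * cos (A + e) - p⁻¹ * (σ ^ 2 / a * (sin (A + e) - sin A))| ≤
      σ / a * (p⁻¹ * (|p - σ * e| + (σ * e) ^ 2 / σ)) := by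
  have hsplit : σ / a * cos (A + e) - p⁻¹ * (σ ^ 2 / a * (sin (A + e) - sin A)) =
      σ / a * (p⁻¹ * ((p - σ * e) * cos (A + e) +
        σ * (e * cos (A + e) - (sin (A + e) - sin A)))) := by
    field_simp
    ring
  have hcos : |(p - σ * e) * cos (A + e)| ≤ |p - σ * e| := by
    rw [abs_mul]; exact mul_le_of_le_one_right (abs_nonneg _) (abs_cos_le_one _)
  have hsin : |σ * (e * cos (A + e) - (sin (A + e) - sin A))| ≤ (σ * e) ^ 2 / σ := by
    have := abs_sub_mul_cos_sub_sin_sub_sin_le A (A + e)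
    rw [add_sub_cancel_left] at this
    rw [abs_mul, abs_of_pos hσ, mul_pow, sq σ, mul_assoc, mul_div_assoc,
      mul_div_cancel_left₀ _ hσ.ne']
    exact mul_le_mul_of_nonneg_left this hσ.le
  rw [hsplit, abs_mul, abs_mul, abs_of_nonneg (by positivity : 0 ≤ σ / a),
    abs_of_pos (inv_pos.2 hp)]
  gcongr
  exact (abs_add_le _ _).trans (add_le_add hcos hsin)

theorem sum_range_mul_sub_eq (r V : ℕ → ℝ) (m : ℕ) :
    ∑ i ∈ range m, r i * (V (i + 1) - V i) =
      r m * V m - r 0 * V 0 - ∑ i ∈ range m, (r (i + 1) - r i) * V (i + 1) := by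
  induction m with
  | zero => simp
  | succ m ih => rw [sum_range_succ, sum_range_succ, ih]; ring

theorem abs_sum_range_mul_sub_le (r V : ℕ → ℝ) (hV : ∀ i, |V i| ≤ 1) (m : ℕ) :
    |∑ i ∈ range m, r i * (V (i + 1) - V i)| ≤
      2 * (|r 0| + ∑ i ∈ range m, |r (i + 1) - r i|) := by
  have hmul : ∀ i j, |r i * V j| ≤ |r i| := fun i j => by
    rw [abs_mul]; exact mul_le_of_le_one_right (abs_nonneg _) (hV j)
  have hrm : |r m| ≤ |r 0| + ∑ i ∈ range m, |r (i + 1) - r i| := by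
    have := abs_sum_le_sum_abs (fun i => r (i + 1) - r i) (range m)
    rw [sum_range_sub] at this
    linarith [abs_sub_abs_le_abs_sub (r m) (r 0)]
  have hsum : |∑ i ∈ range m, (r (i + 1) - r i) * V (i + 1)| ≤
      ∑ i ∈ range m, |r (i + 1) - r i| :=
    (abs_sum_le_sum_abs _ _).trans (sum_le_sum fun i _ => by
      rw [abs_mul]; exact mul_le_of_le_one_right (abs_nonneg _) (hV _))
  rw [sum_range_mul_sub_eq]
  linarith [abs_sub (r m * V m - r 0 * V 0) (∑ i ∈ range m, (r (i + 1) - r i) * V (i + 1)),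
    abs_sub (r m * V m) (r 0 * V 0), hmul m m, hmul 0 0]

theorem abs_mul_cos_sub_mul_sin_sub_sin_le {b q r c : ℝ} (hb : 0 ≤ b) (hr : 0 ≤ r)
    (hq : 0 ≤ q) (hqc : q ≤ c) (u v : ℝ) :
    |b * cos u - q * (r * (sin u - sin v))| ≤ b + 2 * (c * r) := by
  have hsin : |sin u - sin v| ≤ 2 := by
    linarith [abs_sub (sin u) (sin v), abs_sin_le_one u, abs_sin_le_one v]
  refine (abs_sub _ _).trans (add_le_add ?_ ?_)
  · rw [abs_mul, abs_of_nonneg hb]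
    exact mul_le_of_le_one_right hb (abs_cos_le_one u)
  · rw [abs_mul, abs_mul, abs_of_nonneg hq, abs_of_nonneg hr]
    have hc : 0 ≤ c := hq.trans hqc
    calc q * (r * |sin u - sin v|) ≤ c * (r * 2) := by gcongr
      _ = 2 * (c * r) := by ring

theorem abs_sum_range_mul_cos_le (b r ξ : ℕ → ℝ) {q : ℝ} (hq : 0 ≤ q) (m : ℕ) :
    |∑ k ∈ range m, b k * cos (∑ j ∈ range (k + 1), ξ j)| ≤
      ∑ k ∈ range m, |b k * cos (∑ j ∈ range k, ξ j + ξ k) -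
          q * (r k * (sin (∑ j ∈ range k, ξ j + ξ k) - sin (∑ j ∈ range k, ξ j)))| +
        q * (2 * (|r 0| + ∑ k ∈ range m, |r (k + 1) - r k|)) := by
  set V : ℕ → ℝ := fun k => sin (∑ j ∈ range k, ξ j)
  have hsplit : ∑ k ∈ range m, b k * cos (∑ j ∈ range (k + 1), ξ j) =
      ∑ k ∈ range m, (b k * cos (∑ j ∈ range k, ξ j + ξ k) -
          q * (r k * (sin (∑ j ∈ range k, ξ j + ξ k) - sin (∑ j ∈ range k, ξ j)))) +
        q * ∑ k ∈ range m, r k * (V (k + 1) - V k) := by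
    simp only [V, sum_range_succ, mul_sum, ← sum_add_distrib, sub_add_cancel]
  rw [hsplit]
  refine (abs_add_le _ _).trans (add_le_add (abs_sum_le_sum_abs _ _) ?_)
  rw [abs_mul, abs_of_nonneg hq]
  exact mul_le_mul_of_nonneg_left (abs_sum_range_mul_sub_le r V (fun k => abs_sin_le_one _) m) hq

theorem sum_range_le_sum_range_add_mul_sum_range {f B b : ℕ → ℝ} {ε : ℝ} {N : ℕ}
    (hf : ∀ k, 0 ≤ f k) (hB : ∀ k, f k ≤ B k) (hb : ∀ k, 0 ≤ b k) (hε : 0 ≤ ε)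
    (hN : ∀ k ≥ N, f k ≤ ε * b k) (m : ℕ) :
    ∑ k ∈ range m, f k ≤ ∑ k ∈ range N, B k + ε * ∑ k ∈ range m, b k := by
  calc ∑ k ∈ range m, f k ≤ ∑ k ∈ range m, ((if k < N then B k else 0) + ε * b k) :=
        sum_le_sum fun k _ => by
          split_ifs with hk
          · linarith [hB k, mul_nonneg hε (hb k)]
          · linarith [hN k (not_lt.1 hk)]
    _ = ∑ k ∈ range m with k < N, B k + ε * ∑ k ∈ range m, b k := by
        rw [sum_add_distrib, sum_filter, mul_sum]
    _ ≤ ∑ k ∈ range N, B k + ε * ∑ k ∈ range m, b k := by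
        refine add_le_add_left (sum_le_sum_of_subset_of_nonneg (fun k hk => ?_)
          fun k _ _ => (hf k).trans (hB k)) _
        simpa using (mem_filter.1 hk).2

theorem tendstoUniformlyOn_div_of_forall_abs_le {α : Type*} {K : Set α} {S : ℕ → α → ℝ}
    {Δ : ℕ → ℝ} (hΔ : Tendsto Δ atTop atTop)
    (hS : ∀ ε > 0, ∃ C, ∀ n, ∀ x ∈ K, |S n x| ≤ C + ε * Δ n) :
    TendstoUniformlyOn (fun n x => S n x / Δ n) (fun _ => 0) atTop K := by
  rw [Metric.tendstoUniformlyOn_iff]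
  intro ε hε
  obtain ⟨C, hC⟩ := hS (ε / 2) (half_pos hε)
  filter_upwards [hΔ.eventually_gt_atTop 0, hΔ.eventually_gt_atTop (2 * C / ε)]
    with n hΔ0 hΔC x hx
  rw [dist_zero_left, norm_div, Real.norm_eq_abs, Real.norm_eq_abs, abs_of_pos hΔ0,
    div_lt_iff₀ hΔ0]
  rw [div_lt_iff₀ hε] at hΔC
  linarith [hC n x hx]

theorem exists_forall_abs_mul_cos_sub_inv_mul_sin_sub_sin_le {α : Type*} {K : Set α}
    {γ a : ℕ → ℝ} {ξ : ℕ → α → ℝ} {ψ : α → ℝ} {c : ℝ} (ha : ∀ n, 0 ≤ a n)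
    (hγ : Tendsto γ atTop atTop)
    (hunif : TendstoUniformlyOn (fun n x => √(γ n) * ξ n x) ψ atTop K)
    (hc : 0 < c) (hψ : ∀ x ∈ K, c⁻¹ ≤ ψ x ∧ ψ x ≤ c) (A : ℕ → α → ℝ) {ε : ℝ} (hε : 0 < ε) :
    ∃ N, ∀ k ≥ N, ∀ x ∈ K,
      |√(γ k) / a k * cos (A k x + ξ k x) -
          (ψ x)⁻¹ * (γ k / a k * (sin (A k x + ξ k x) - sin (A k x)))| ≤
        ε * (√(γ k) / a k) := by
  set δ := min 1 (ε / (2 * c))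
  have hδ : 0 < δ := lt_min one_pos (by positivity)
  have hcδ : c * δ < ε := by
    have : c * (ε / (2 * c)) = ε / 2 := by field_simp
    linarith [mul_le_mul_of_nonneg_left (min_le_right 1 (ε / (2 * c))) hc.le]
  have hlim : Tendsto (fun k => c * (δ + (c + 1) ^ 2 / √(γ k))) atTop (𝓝 (c * δ)) := by
    simpa using ((tendsto_const_nhds (x := (c + 1) ^ 2)).div_atTop
      (tendsto_sqrt_atTop.comp hγ)).const_add δ |>.const_mul c
  obtain ⟨N, hN⟩ := eventually_atTop.1 ((hlim.eventually (eventually_le_nhds hcδ)).and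
    ((hγ.eventually_gt_atTop 0).and (Metric.tendstoUniformlyOn_iff.1 hunif δ hδ)))
  refine ⟨N, fun k hk x hx => ?_⟩
  obtain ⟨hsmall, hγk, hclose⟩ := hN k hk
  set σ := √(γ k)
  have hσ : 0 < σ := sqrt_pos.2 hγk
  have hp0 : 0 < ψ x := (inv_pos.2 hc).trans_le (hψ x hx).1
  have hpinv : (ψ x)⁻¹ ≤ c := inv_le_of_inv_le₀ hc (hψ x hx).1
  have hdev : |ψ x - σ * ξ k x| ≤ δ := by
    have := hclose x hx
    rw [dist_eq] at this
    exact this.le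
  have hsq : (σ * ξ k x) ^ 2 ≤ (c + 1) ^ 2 := by
    have := abs_sub_abs_le_abs_sub (σ * ξ k x) (ψ x)
    rw [abs_sub_comm, abs_of_pos hp0] at this
    rw [← sq_abs]
    exact pow_le_pow_left₀ (abs_nonneg _)
      (by linarith [(hψ x hx).2, min_le_left 1 (ε / (2 * c))]) 2
  have hr : γ k / a k = σ ^ 2 / a k := by rw [sq_sqrt hγk.le]
  have hb : 0 ≤ σ / a k := div_nonneg hσ.le (ha k)
  rw [hr, mul_comm ε]
  calc _ ≤ σ / a k * ((ψ x)⁻¹ * (|ψ x - σ * ξ k x| + (σ * ξ k x) ^ 2 / σ)) :=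
        abs_div_mul_cos_sub_inv_mul_sin_sub_sin_le hσ (ha k) hp0 _ _
    _ ≤ σ / a k * (c * (δ + (c + 1) ^ 2 / σ)) := by gcongr
    _ ≤ σ / a k * ε := by gcongr

theorem stmt_4_general (d : ℕ) (K : Set (Fin d → ℝ))
    (γ a : ℕ → ℝ) (hγpos : ∀ n, 0 < γ n) (hapos : ∀ n, 0 < a n)
    (hγ : Filter.Tendsto γ Filter.atTop Filter.atTop)
    (hdiv : Filter.Tendsto (fun n => ∑ j ∈ Finset.range (n + 1), Real.sqrt (γ j) / a j)
      Filter.atTop Filter.atTop)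
    (hBV : Summable fun n => |γ (n + 1) / a (n + 1) - γ n / a n|)
    (ξ : ℕ → (Fin d → ℝ) → ℝ) (ψ : (Fin d → ℝ) → ℝ)
    (hunif : TendstoUniformlyOn (fun n x => Real.sqrt (γ n) * ξ n x) ψ Filter.atTop K)
    (c : ℝ) (hc : 0 < c) (hψ : ∀ x ∈ K, c⁻¹ ≤ ψ x ∧ ψ x ≤ c) :
    TendstoUniformlyOn
      (fun n x =>
        (∑ k ∈ Finset.range (n + 1),
            Real.sqrt (γ k) / a k * Real.cos (∑ j ∈ Finset.range (k + 1), ξ j x)) /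
          ∑ j ∈ Finset.range (n + 1), Real.sqrt (γ j) / a j)
      (fun _ => 0) Filter.atTop K := by
  have hb : ∀ k, 0 ≤ √(γ k) / a k := fun k => div_nonneg (sqrt_nonneg _) (hapos k).le
  have hr : ∀ k, 0 ≤ γ k / a k := fun k => (div_pos (hγpos k) (hapos k)).le
  set T := ∑' n, |γ (n + 1) / a (n + 1) - γ n / a n|
  refine tendstoUniformlyOn_div_of_forall_abs_le hdiv fun ε hε => ?_
  obtain ⟨N, hN⟩ := exists_forall_abs_mul_cos_sub_inv_mul_sin_sub_sin_le
    (fun n => (hapos n).le) hγ hunif hc hψ (fun k x => ∑ j ∈ range k, ξ j x) hε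
  refine ⟨∑ k ∈ range N, (√(γ k) / a k + 2 * (c * (γ k / a k))) +
    c * (2 * (|γ 0 / a 0| + T)), fun n x hx => ?_⟩
  have hq : 0 ≤ (ψ x)⁻¹ := inv_nonneg.2 ((inv_pos.2 hc).le.trans (hψ x hx).1)
  have hqc : (ψ x)⁻¹ ≤ c := inv_le_of_inv_le₀ hc (hψ x hx).1
  have herr := sum_range_le_sum_range_add_mul_sum_range (fun k => abs_nonneg _)
    (fun k => abs_mul_cos_sub_mul_sin_sub_sin_le (hb k) (hr k) hq hqc _ _) hb hε.le
    (fun k hk => hN k hk x hx) (n + 1)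
  have hvar : ∑ k ∈ range (n + 1), |γ (k + 1) / a (k + 1) - γ k / a k| ≤ T :=
    hBV.sum_le_tsum _ fun _ _ => abs_nonneg _
  have habel : (ψ x)⁻¹ * (2 * (|γ 0 / a 0| +
      ∑ k ∈ range (n + 1), |γ (k + 1) / a (k + 1) - γ k / a k|)) ≤
      c * (2 * (|γ 0 / a 0| + T)) := by gcongr
  exact (abs_sum_range_mul_cos_le (fun k => √(γ k) / a k) (fun k => γ k / a k)
    (fun j => ξ j x) hq (n + 1)).trans (by linarith)

/-- Averaging lemma for oscillatory sums (Lemma 1 of the paper). -/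
theorem stmt_4 (d : ℕ) (K : Set (Fin d → ℝ)) (hK : IsCompact K)
    (γ a : ℕ → ℝ) (hγpos : ∀ n, 0 < γ n) (hapos : ∀ n, 0 < a n)
    (hγ : Filter.Tendsto γ Filter.atTop Filter.atTop)
    (hdiv : Filter.Tendsto (fun n => ∑ j ∈ Finset.range (n + 1), Real.sqrt (γ j) / a j)
      Filter.atTop Filter.atTop)
    (hBV : Summable fun n => |γ (n + 1) / a (n + 1) - γ n / a n|)
    (ξ : ℕ → (Fin d → ℝ) → ℝ) (ψ : (Fin d → ℝ) → ℝ)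
    (hunif : TendstoUniformlyOn (fun n x => Real.sqrt (γ n) * ξ n x) ψ Filter.atTop K)
    (c : ℝ) (hc : 0 < c) (hψ : ∀ x ∈ K, c⁻¹ ≤ ψ x ∧ ψ x ≤ c) :
    TendstoUniformlyOn
      (fun n x =>
        (∑ k ∈ Finset.range (n + 1),
            Real.sqrt (γ k) / a k * Real.cos (∑ j ∈ Finset.range (k + 1), ξ j x)) /
          ∑ j ∈ Finset.range (n + 1), Real.sqrt (γ j) / a j)
      (fun _ => 0) Filter.atTop K :=
  stmt_4_general d K γ a hγpos hapos hγ hdiv hBV ξ ψ hunif c hc hψ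
end

section
/- Let N ≥ 1 and let (𝛼̃_n)_{n∈ℤ} be a 2N-periodic sequence of positive reals with 𝛼̃₀𝛼̃₂⋯𝛼̃_{2N−2} = 𝛼̃₁𝛼̃₃⋯𝛼̃_{2N−1}. Define N-periodic Jacobi parameters α_n = 𝛼̃_{2n+1}𝛼̃_{2n+2} and β_n = 𝛼̃_{2n}² + 𝛼̃_{2n+1}². Let (𝔭_n) be the orthogonal polynomials determined by 𝔭₀ = 1, 𝔭₁(x) = (x − β₀)/α₀ and α_{n−1}𝔭_{n−1}(x) + β_n𝔭_n(x) + α_n𝔭_{n+1}(x) = x𝔭_n(x). Then 𝔭_n(0) = (𝛼̃₀/(𝛼̃_{2n} w_n))·Σ_{k=0}^n w_k², where w_k = (−1)^k (𝛼̃₀𝛼̃₂⋯𝛼̃_{2k−2})/(𝛼̃₁𝛼̃₃⋯𝛼̃_{2k−1}) (with w₀ = 1). -/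
/-- Explicit formula for the orthogonal polynomials at `0` for the symmetric
birth–death periodic parameters (Lemma 2, Claim, of the paper). -/
theorem stmt_8 (N : ℕ) (hN : 0 < N) (at_ : ℤ → ℝ) (hpos : ∀ n, 0 < at_ n)
    (hper : ∀ n : ℤ, at_ (n + 2 * N) = at_ n)
    (hprod : ∏ k ∈ Finset.range N, at_ (2 * (k : ℤ)) =
      ∏ k ∈ Finset.range N, at_ (2 * (k : ℤ) + 1))
    (α β : ℕ → ℝ)
    (hα : ∀ n : ℕ, α n = at_ (2 * (n : ℤ) + 1) * at_ (2 * (n : ℤ) + 2))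
    (hβ : ∀ n : ℕ, β n = at_ (2 * (n : ℤ)) ^ 2 + at_ (2 * (n : ℤ) + 1) ^ 2)
    (w : ℕ → ℝ)
    (hw : ∀ k : ℕ, w k = (-1) ^ k * (∏ l ∈ Finset.range k, at_ (2 * (l : ℤ))) /
      ∏ l ∈ Finset.range k, at_ (2 * (l : ℤ) + 1))
    (p : ℕ → ℝ) (hp0 : p 0 = 1) (hp1 : p 1 = (0 - β 0) / α 0)
    (hrec : ∀ n : ℕ, 1 ≤ n →
      α (n - 1) * p (n - 1) + β n * p n + α n * p (n + 1) = 0 * p n) :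
    ∀ n : ℕ, p n = at_ 0 / (at_ (2 * (n : ℤ)) * w n) * ∑ k ∈ Finset.range (n + 1), w k ^ 2 := by
  have hne : ∀ n : ℤ, at_ n ≠ 0 := fun n => (hpos n).ne'
  have hwne : ∀ k : ℕ, w k ≠ 0 := by
    intro k
    rw [hw]
    apply div_ne_zero
    · exact mul_ne_zero (pow_ne_zero _ (by norm_num)) (Finset.prod_ne_zero_iff.2 fun l _ => hne _)
    · exact Finset.prod_ne_zero_iff.2 fun l _ => hne _
  have hwstep : ∀ k : ℕ, at_ (2 * (k : ℤ) + 1) * w (k + 1) = -(at_ (2 * (k : ℤ)) * w k) := by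
    intro k
    rw [hw, hw, Finset.prod_range_succ, Finset.prod_range_succ]
    set P := ∏ l ∈ Finset.range k, at_ (2 * (l : ℤ)) with hP
    set Q := ∏ l ∈ Finset.range k, at_ (2 * (l : ℤ) + 1) with hQ
    have hQ0 : Q ≠ 0 := Finset.prod_ne_zero_iff.2 fun l _ => hne _
    have hb : at_ (2 * (k : ℤ) + 1) ≠ 0 := hne _
    push_cast [pow_succ]
    field_simp
  intro n
  induction n using Nat.strong_induction_on with
  | _ n ih =>
    match n, ih with
    | 0, _ => simp [hp0, hw, hne 0]
    | 1, _ =>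
      have hw1 := hw 1
      have hw0 := hw 0
      simp [Finset.prod_range_one] at hw1 hw0
      rw [hp1, hα, hβ, Finset.sum_range_succ, Finset.sum_range_succ,
        Finset.sum_range_zero, hw1, hw0]
      push_cast
      field_simp [hne 0, hne 1, hne 2]
      ring
    | (m + 2), ih =>
      have h1 := ih m (by omega)
      have h2 := ih (m + 1) (by omega)
      have hr := hrec (m + 1) (by omega)
      simp only [Nat.add_sub_cancel, zero_mul] at hr
      have hcancel : α (m + 1) ≠ 0 := by
        rw [hα]; exact mul_ne_zero (hne _) (hne _)
      refine mul_left_cancel₀ hcancel ?_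
      have hL : α (m + 1) * p (m + 2) = -(α m * p m + β (m + 1) * p (m + 1)) := by
        linarith [hr]
      rw [hL, h1, h2, hα, hα, hβ]
      have e1 := hwstep m
      have e2 := hwstep (m + 1)
      have s1 : ∑ k ∈ Finset.range (m + 1 + 1), w k ^ 2 =
          (∑ k ∈ Finset.range (m + 1), w k ^ 2) + w (m + 1) ^ 2 :=
        Finset.sum_range_succ _ _
      have s2 : ∑ k ∈ Finset.range (m + 2 + 1), w k ^ 2 =
          (∑ k ∈ Finset.range (m + 1), w k ^ 2) + w (m + 1) ^ 2 + w (m + 2) ^ 2 := by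
        rw [Finset.sum_range_succ, Finset.sum_range_succ]
      rw [s1, s2]
      push_cast at e1 e2 ⊢
      rw [show (2 * ((m:ℤ) + 1)) = 2 * (m:ℤ) + 2 by ring,
        show (2 * (m:ℤ) + 2 + 1) = 2 * (m:ℤ) + 3 by ring] at e2
      rw [show (2 * ((m:ℤ) + 1)) = 2 * (m:ℤ) + 2 by ring,
        show (2 * (m:ℤ) + 2 + 1) = 2 * (m:ℤ) + 3 by ring,
        show (2 * (m:ℤ) + 2 + 2) = 2 * (m:ℤ) + 4 by ring,
        show (2 * ((m:ℤ) + 2)) = 2 * (m:ℤ) + 4 by ring]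
      set a0 := at_ 0
      set A := at_ (2 * (m : ℤ)) with hA
      set B := at_ (2 * (m : ℤ) + 1) with hB
      set C := at_ (2 * (m : ℤ) + 2) with hC
      set D := at_ (2 * (m : ℤ) + 3) with hD
      set E := at_ (2 * (m : ℤ) + 4) with hE
      set u := w m
      set v := w (m + 1)
      set z := w (m + 2)
      set S := ∑ k ∈ Finset.range (m + 1), w k ^ 2
      have hA0 : A ≠ 0 := hne _
      have hC0 : C ≠ 0 := hne _
      have hD0 : D ≠ 0 := hne _
      have hE0 : E ≠ 0 := hne _
      have hu0 : u ≠ 0 := hwne m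
      have hv0 : v ≠ 0 := hwne (m + 1)
      have hz0 : z ≠ 0 := hwne (m + 2)
      have hBval : B = -(A * u) / v := by rw [eq_div_iff hv0]; linarith [e1]
      have hDval : D = -(C * v) / z := by rw [eq_div_iff hz0]; linarith [e2]
      rw [hBval, hDval]
      field_simp
      ring
end

section
/- In the setting of the previous statement (2N-periodic (𝛼̃_n) with 𝛼̃₀𝛼̃₂⋯𝛼̃_{2N−2} = 𝛼̃₁𝛼̃₃⋯𝛼̃_{2N−1}, and α_n = 𝛼̃_{2n+1}𝛼̃_{2n+2}, β_n = 𝛼̃_{2n}² + 𝛼̃_{2n+1}²), the trace of the N-step transfer matrix at zero satisfies tr 𝔛₀(0) = 2(−1)^N, where 𝔛₀(x) = 𝔅_{N−1}(x)⋯𝔅₁(x)𝔅₀(x) with 𝔅_j(x) = [[0, 1], [−α_{j−1}/α_j, (x − β_j)/α_j]]. -/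
/-!
Since `β n = a(2n)² + a(2n+1)²` and `α n = a(2n+1) a(2n+2)`, the Jacobi matrix factors as `AᵀA`
with `A` lower bidiagonal (diagonal `a(2n)`, subdiagonal `a(2n+1)`). At `x = 0` this factorization
makes the transfer matrices `B n` gauge equivalent to upper triangular matrices: with
`E n = !![0, 1; a(2n-1), a(2n)]` (which sends `(p (n-1), p n)` to `(p n, (A p) n)`) one has
`E (n+1) * B n = U n * E n`, where `U n` has diagonal `-a(2n+1)/a(2n+2)`, `-a(2n)/a(2n+1)`.
Since `E` is `N`-periodic, the `N`-step transfer matrix is conjugate to `U (N-1) ⋯ U 0`, whose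
diagonal entries are `(-1)^N` times `∏ a(odd) / ∏ a(even)` and its inverse, both `(-1)^N`.
-/

open Finset

namespace Matrix

variable {m R : Type*} [Fintype m] [LinearOrder m] [CommSemiring R]

theorem IsUpperTriangular.diag_mul {M N : Matrix m m R} (hM : M.IsUpperTriangular)
    (hN : N.IsUpperTriangular) : (M * N).diag = M.diag * N.diag := by
  ext i
  refine (Finset.sum_eq_single i (fun k _ hki => ?_) (by simp)).trans rfl
  rcases lt_or_gt_of_ne hki with hlt | hgt
  · simp [hM hlt]
  · simp [hN hgt]

variable [DecidableEq m]

theorem IsUpperTriangular.list_prod {L : List (Matrix m m R)}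
    (hL : ∀ M ∈ L, M.IsUpperTriangular) :
    L.prod.IsUpperTriangular ∧ L.prod.diag = (L.map diag).prod := by
  induction L with
  | nil => exact ⟨blockTriangular_one, diag_one⟩
  | cons M L ih =>
    obtain ⟨hprod, hdiag⟩ := ih fun N hN => hL N (List.mem_cons_of_mem M hN)
    have hM := hL M List.mem_cons_self
    simp only [List.prod_cons, List.map_cons]
    exact ⟨BlockTriangular.mul hM hprod, by rw [hM.diag_mul hprod, hdiag]⟩

end Matrix

theorem Matrix.trace_eq_of_mul_eq_mul {m R : Type*} [Fintype m] [DecidableEq m] [CommRing R]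
    {P X Y : Matrix m m R} (hP : IsUnit P.det) (h : P * X = Y * P) : X.trace = Y.trace := by
  rw [← trace_conj ((isUnit_iff_isUnit_det P).mpr hP) X, h, mul_nonsing_inv_cancel_right _ _ hP]

theorem List.mul_prod_map_range_reverse_of_intertwine {M : Type*} [Monoid M] {f g E : ℕ → M}
    (h : ∀ n, E (n + 1) * f n = g n * E n) (N : ℕ) :
    E N * ((List.range N).reverse.map f).prod = ((List.range N).reverse.map g).prod * E 0 := by
  induction N with
  | zero => simp
  | succ N ih =>
    simp only [List.range_succ, List.reverse_append, List.reverse_singleton, List.singleton_append,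
      List.map_cons, List.prod_cons]
    rw [← mul_assoc, h, mul_assoc, ih, mul_assoc]

theorem List.prod_map_range_reverse {M : Type*} [CommMonoid M] (f : ℕ → M) (N : ℕ) :
    ((List.range N).reverse.map f).prod = ∏ i ∈ Finset.range N, f i := by
  rw [List.map_reverse, List.prod_reverse, prod_eq_multiset_prod, range_val, Multiset.range,
    Multiset.map_coe, Multiset.prod_coe]

theorem Finset.prod_neg_div_eq_neg_one_pow {ι K : Type*} [Field K] {s : Finset ι} {f g : ι → K}
    (h : ∏ i ∈ s, f i = ∏ i ∈ s, g i) (hg : ∀ i ∈ s, g i ≠ 0) :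
    ∏ i ∈ s, -(f i / g i) = (-1) ^ s.card := by
  rw [prod_neg, prod_div_distrib, h, div_self (prod_ne_zero_iff.mpr hg), mul_one]

theorem Finset.prod_range_succ_shift_of_eq {M : Type*} [CommMonoidWithZero M] [IsCancelMulZero M]
    {f : ℕ → M} {N : ℕ} (hN : f N = f 0) (h0 : f 0 ≠ 0) :
    ∏ k ∈ range N, f (k + 1) = ∏ k ∈ range N, f k := by
  refine mul_right_cancel₀ h0 ?_
  rw [← prod_range_succ', prod_range_succ, hN]

noncomputable section DarbouxGauge

variable (a : ℤ → ℝ)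

def darbouxGauge (n : ℤ) : Matrix (Fin 2) (Fin 2) ℝ :=
  !![0, 1; a (2 * n - 1), a (2 * n)]

def darbouxTransfer (n : ℤ) : Matrix (Fin 2) (Fin 2) ℝ :=
  !![-(a (2 * n + 1) / a (2 * n + 2)), -(a (2 * n) / (a (2 * n + 1) * a (2 * n + 2)));
     0, -(a (2 * n) / a (2 * n + 1))]

variable {a}

theorem isUnit_det_darbouxGauge (ha : ∀ n, a n ≠ 0) (n : ℤ) : IsUnit (darbouxGauge a n).det := by
  simp [darbouxGauge, Matrix.det_fin_two_of, ha]

theorem darbouxGauge_periodic {N : ℕ} (hper : ∀ n : ℤ, a (n + 2 * N) = a n) :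
    darbouxGauge a N = darbouxGauge a 0 := by
  simp only [darbouxGauge, mul_zero, zero_sub, ← hper (-1), ← hper 0]
  rw [zero_add, neg_add_eq_sub]

theorem darbouxTransfer_isUpperTriangular (n : ℤ) : (darbouxTransfer a n).IsUpperTriangular := by
  intro i j hij
  fin_cases i <;> fin_cases j <;> simp_all [darbouxTransfer]

theorem darbouxGauge_mul_eq_darbouxTransfer_mul (ha : ∀ n, a n ≠ 0) {α β : ℤ → ℝ}
    (hα : ∀ n : ℤ, α n = a (2 * n + 1) * a (2 * n + 2))
    (hβ : ∀ n : ℤ, β n = a (2 * n) ^ 2 + a (2 * n + 1) ^ 2) (n : ℤ) :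
    darbouxGauge a (n + 1) * !![0, 1; -(α (n - 1) / α n), (0 - β n) / α n] =
      darbouxTransfer a n * darbouxGauge a n := by
  have h1 : 2 * (n - 1) + 1 = 2 * n - 1 := by ring
  have h2 : 2 * (n - 1) + 2 = 2 * n := by ring
  have h3 : 2 * (n + 1) = 2 * n + 2 := by ring
  have h4 : 2 * n + 2 - 1 = 2 * n + 1 := by ring
  have := ha (2 * n + 1)
  have := ha (2 * n + 2)
  rw [hα, hα, hβ, h1, h2]
  simp only [darbouxGauge, darbouxTransfer, h3, h4, Matrix.mul_fin_two]
  ext i j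
  fin_cases i <;> fin_cases j <;> simp [field]

theorem trace_prod_darbouxTransfer (N : ℕ) :
    (((List.range N).reverse.map fun n : ℕ => darbouxTransfer a n).prod).trace =
      ∏ k ∈ range N, -(a (2 * k + 1) / a (2 * k + 2)) +
        ∏ k ∈ range N, -(a (2 * k) / a (2 * k + 1)) := by
  obtain ⟨-, hdiag⟩ := Matrix.IsUpperTriangular.list_prod
    (L := (List.range N).reverse.map fun n : ℕ => darbouxTransfer a n)
    (by simp [darbouxTransfer_isUpperTriangular])
  rw [Matrix.trace, hdiag, Fin.sum_univ_two]
  simp only [Pi.list_prod_apply, List.map_map, Function.comp_def, List.prod_map_range_reverse]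
  rfl

end DarbouxGauge

theorem stmt_9_general (N : ℕ) (at_ : ℤ → ℝ) (hpos : ∀ n, 0 < at_ n)
    (hper : ∀ n : ℤ, at_ (n + 2 * N) = at_ n)
    (hprod : ∏ k ∈ Finset.range N, at_ (2 * (k : ℤ)) =
      ∏ k ∈ Finset.range N, at_ (2 * (k : ℤ) + 1))
    (α β : ℤ → ℝ)
    (hα : ∀ n : ℤ, α n = at_ (2 * n + 1) * at_ (2 * n + 2))
    (hβ : ∀ n : ℤ, β n = at_ (2 * n) ^ 2 + at_ (2 * n + 1) ^ 2)
    (B : ℕ → Matrix (Fin 2) (Fin 2) ℝ)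
    (hB : ∀ j : ℕ, B j = !![0, 1; -(α ((j : ℤ) - 1) / α (j : ℤ)), (0 - β (j : ℤ)) / α (j : ℤ)]) :
    Matrix.trace (((List.range N).reverse.map B).prod) = 2 * (-1) ^ N := by
  have ha : ∀ n, at_ n ≠ 0 := fun n => (hpos n).ne'
  have hconj := List.mul_prod_map_range_reverse_of_intertwine (f := B)
    (g := fun n : ℕ => darbouxTransfer at_ n) (E := fun n : ℕ => darbouxGauge at_ n)
    (fun n => by rw [hB]; push_cast; exact darbouxGauge_mul_eq_darbouxTransfer_mul ha hα hβ n) N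
  rw [darbouxGauge_periodic hper, Nat.cast_zero] at hconj
  have hshift : ∏ k ∈ range N, at_ (2 * (k : ℤ) + 2) = ∏ k ∈ range N, at_ (2 * (k : ℤ)) := by
    simpa [mul_add] using prod_range_succ_shift_of_eq (f := fun k : ℕ => at_ (2 * (k : ℤ)))
      (by simpa using hper 0) (ha _)
  rw [Matrix.trace_eq_of_mul_eq_mul (isUnit_det_darbouxGauge ha 0) hconj,
    trace_prod_darbouxTransfer,
    prod_neg_div_eq_neg_one_pow (hshift.trans hprod).symm (fun _ _ => ha _),
    prod_neg_div_eq_neg_one_pow hprod (fun _ _ => ha _), card_range]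
  ring

/-- For the symmetric birth–death periodic parameters, the `N`-step transfer
matrix at `0` has trace `2·(−1)^N`. -/
theorem stmt_9 (N : ℕ) (hN : 0 < N) (at_ : ℤ → ℝ) (hpos : ∀ n, 0 < at_ n)
    (hper : ∀ n : ℤ, at_ (n + 2 * N) = at_ n)
    (hprod : ∏ k ∈ Finset.range N, at_ (2 * (k : ℤ)) =
      ∏ k ∈ Finset.range N, at_ (2 * (k : ℤ) + 1))
    (α β : ℤ → ℝ)
    (hα : ∀ n : ℤ, α n = at_ (2 * n + 1) * at_ (2 * n + 2))
    (hβ : ∀ n : ℤ, β n = at_ (2 * n) ^ 2 + at_ (2 * n + 1) ^ 2)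
    (B : ℕ → Matrix (Fin 2) (Fin 2) ℝ)
    (hB : ∀ j : ℕ, B j = !![0, 1; -(α ((j : ℤ) - 1) / α (j : ℤ)), (0 - β (j : ℤ)) / α (j : ℤ)]) :
    Matrix.trace (((List.range N).reverse.map B).prod) = 2 * (-1) ^ N :=
  stmt_9_general N at_ hpos hper hprod α β hα hβ B hB
end

section
/- Let (C_j : j ≥ j₀) be invertible 2×2 complex matrices with Σ_j ‖C_{j+1} − C_j‖ < ∞ and inf_j ‖C_j⁻¹‖⁻¹ > 0, and let (D_j) be arbitrary 2×2 matrices. Then there is c > 0 such that for all j ≥ L > j₀, ‖(C_{j−1}D_{j−1}C_{j−1}⁻¹)(C_{j−2}D_{j−2}C_{j−2}⁻¹)⋯(C_L D_L C_L⁻¹)‖ ≤ c·∏_{k=L}^{j−1}‖D_k‖. -/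
attribute [local instance] Matrix.linftyOpNormedAddCommGroup Matrix.linftyOpNormedRing

/-- Uniform bound for products of conjugated matrices `C_k D_k C_k⁻¹` when
`(C_k)` has summable increments and uniformly bounded inverses. -/
theorem stmt_18 (C D : ℕ → Matrix (Fin 2) (Fin 2) ℂ) (j₀ : ℕ)
    (hCinv : ∀ j, IsUnit (C j).det)
    (hsum : Summable fun j => ‖C (j + 1) - C j‖)
    (hbdd : ∃ δ > 0, ∀ j, δ ≤ ‖(C j)⁻¹‖⁻¹) :
    ∃ c > 0, ∀ L j : ℕ, j₀ < L → L ≤ j →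
      ‖(((List.range (j - L)).reverse.map fun k => C (L + k) * D (L + k) * (C (L + k))⁻¹).prod)‖ ≤
        c * ∏ k ∈ Finset.Ico L j, ‖D k‖ := by
  obtain ⟨δ, hδ, hδle⟩ := hbdd
  set S := ∑' j, ‖C (j + 1) - C j‖ with hSdef
  have hS0 : 0 ≤ S := tsum_nonneg fun _ => norm_nonneg _
  have hδinv : (0:ℝ) < δ⁻¹ := inv_pos.mpr hδ
  have hinv : ∀ j, ‖(C j)⁻¹‖ ≤ δ⁻¹ := by
    intro j
    have h := inv_anti₀ hδ (hδle j)
    rwa [inv_inv] at h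
  have hpart : ∀ s : Finset ℕ, ∑ k ∈ s, ‖C (k + 1) - C k‖ ≤ S :=
    fun s => Summable.sum_le_tsum s (fun i _ => norm_nonneg _) hsum
  have hCbd : ∀ m, ‖C m‖ ≤ ‖C 0‖ + S := by
    intro m
    have h1 : C m - C 0 = ∑ k ∈ Finset.range m, (C (k + 1) - C k) :=
      (Finset.sum_range_sub (fun k => C k) m).symm
    have h2 : ‖C m - C 0‖ ≤ S := by
      rw [h1]
      exact (norm_sum_le _ _).trans (hpart _)
    calc ‖C m‖ = ‖C 0 + (C m - C 0)‖ := by congr 1; abel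
      _ ≤ ‖C 0‖ + ‖C m - C 0‖ := norm_add_le _ _
      _ ≤ ‖C 0‖ + S := by linarith
  refine ⟨(‖C 0‖ + S + 1) * δ⁻¹ * Real.exp (δ⁻¹ * S), ?_, ?_⟩
  · have h1 : (0:ℝ) < ‖C 0‖ + S + 1 := by have := norm_nonneg (C 0); linarith
    positivity
  intro L j hL hLj
  set f : ℕ → Matrix (Fin 2) (Fin 2) ℂ := fun k => C (L + k) * D (L + k) * (C (L + k))⁻¹ with hf
  have key : ∀ n : ℕ,
      ‖(C (L + n))⁻¹ * ((List.range n).reverse.map f).prod * C L‖ ≤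
        (∏ k ∈ Finset.range n, ‖D (L + k)‖) *
          Real.exp (δ⁻¹ * ∑ k ∈ Finset.range n, ‖C (L + k + 1) - C (L + k)‖) := by
    intro n
    induction n with
    | zero => simp [Matrix.nonsing_inv_mul _ (hCinv L)]
    | succ n ih =>
      have hprod : ((List.range (n + 1)).reverse.map f).prod
          = f n * ((List.range n).reverse.map f).prod := by
        rw [List.range_succ]; simp
      set P := ((List.range n).reverse.map f).prod with hP
      have hA : (C (L + (n + 1)))⁻¹ * (f n * P) * C L
          = ((C (L + n + 1))⁻¹ * C (L + n)) * D (L + n) * ((C (L + n))⁻¹ * P * C L) := by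
        show (C (L + n + 1))⁻¹ * (C (L + n) * D (L + n) * (C (L + n))⁻¹ * P) * C L = _
        noncomm_ring
      have hB : (C (L + n + 1))⁻¹ * C (L + n)
          = 1 + (C (L + n + 1))⁻¹ * (C (L + n) - C (L + n + 1)) := by
        rw [mul_sub, Matrix.nonsing_inv_mul _ (hCinv _)]
        abel
      have hBnorm : ‖(C (L + n + 1))⁻¹ * C (L + n)‖ ≤
          Real.exp (δ⁻¹ * ‖C (L + n + 1) - C (L + n)‖) := by
        rw [hB]
        calc ‖1 + (C (L + n + 1))⁻¹ * (C (L + n) - C (L + n + 1))‖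
            ≤ ‖(1 : Matrix (Fin 2) (Fin 2) ℂ)‖ + ‖(C (L + n + 1))⁻¹ * (C (L + n) - C (L + n + 1))‖ :=
              norm_add_le _ _
          _ ≤ 1 + δ⁻¹ * ‖C (L + n + 1) - C (L + n)‖ := by
              rw [norm_one]
              gcongr
              calc ‖(C (L + n + 1))⁻¹ * (C (L + n) - C (L + n + 1))‖
                  ≤ ‖(C (L + n + 1))⁻¹‖ * ‖C (L + n) - C (L + n + 1)‖ := norm_mul_le _ _
                _ ≤ δ⁻¹ * ‖C (L + n + 1) - C (L + n)‖ := by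
                    rw [norm_sub_rev]
                    gcongr
                    exact hinv _
          _ ≤ Real.exp (δ⁻¹ * ‖C (L + n + 1) - C (L + n)‖) := by
              have := Real.add_one_le_exp (δ⁻¹ * ‖C (L + n + 1) - C (L + n)‖)
              linarith
      calc ‖(C (L + (n + 1)))⁻¹ * ((List.range (n + 1)).reverse.map f).prod * C L‖
          = ‖((C (L + n + 1))⁻¹ * C (L + n)) * D (L + n) * ((C (L + n))⁻¹ * P * C L)‖ := by
            rw [hprod, hA]
        _ ≤ ‖(C (L + n + 1))⁻¹ * C (L + n)‖ * ‖D (L + n)‖ * ‖(C (L + n))⁻¹ * P * C L‖ :=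
            (norm_mul_le _ _).trans (by gcongr; exact norm_mul_le _ _)
        _ ≤ Real.exp (δ⁻¹ * ‖C (L + n + 1) - C (L + n)‖) * ‖D (L + n)‖ *
              ((∏ k ∈ Finset.range n, ‖D (L + k)‖) *
                Real.exp (δ⁻¹ * ∑ k ∈ Finset.range n, ‖C (L + k + 1) - C (L + k)‖)) :=
            mul_le_mul (mul_le_mul hBnorm le_rfl (norm_nonneg _) (Real.exp_pos _).le) ih
              (norm_nonneg _) (by positivity)
        _ = (∏ k ∈ Finset.range (n + 1), ‖D (L + k)‖) *
              Real.exp (δ⁻¹ * ∑ k ∈ Finset.range (n + 1), ‖C (L + k + 1) - C (L + k)‖) := by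
            rw [Finset.prod_range_succ, Finset.sum_range_succ, mul_add, Real.exp_add]
            ring
  set n := j - L with hn
  set P := ((List.range n).reverse.map f).prod with hP
  have hrec : P = C (L + n) * ((C (L + n))⁻¹ * P * C L) * (C L)⁻¹ := by
    rw [show C (L + n) * ((C (L + n))⁻¹ * P * C L) * (C L)⁻¹
        = (C (L + n) * (C (L + n))⁻¹) * P * (C L * (C L)⁻¹) by noncomm_ring,
      Matrix.mul_nonsing_inv _ (hCinv _), Matrix.mul_nonsing_inv _ (hCinv _), one_mul, mul_one]
  have hsum_le : ∑ k ∈ Finset.range n, ‖C (L + k + 1) - C (L + k)‖ ≤ S := by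
    have : ∑ k ∈ Finset.range n, ‖C (L + k + 1) - C (L + k)‖
        = ∑ k ∈ Finset.Ico L (L + n), ‖C (k + 1) - C k‖ := by
      rw [Finset.sum_Ico_eq_sum_range]
      simp
    rw [this]
    exact hpart _
  have hprodD : ∏ k ∈ Finset.Ico L j, ‖D k‖ = ∏ k ∈ Finset.range n, ‖D (L + k)‖ := by
    rw [Finset.prod_Ico_eq_prod_range]
  rw [hprodD]
  calc ‖P‖ = ‖C (L + n) * ((C (L + n))⁻¹ * P * C L) * (C L)⁻¹‖ := by rw [← hrec]
    _ ≤ ‖C (L + n)‖ * ‖(C (L + n))⁻¹ * P * C L‖ * ‖(C L)⁻¹‖ :=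
        (norm_mul_le _ _).trans (by gcongr; exact norm_mul_le _ _)
    _ ≤ (‖C 0‖ + S + 1) * ((∏ k ∈ Finset.range n, ‖D (L + k)‖) *
          Real.exp (δ⁻¹ * ∑ k ∈ Finset.range n, ‖C (L + k + 1) - C (L + k)‖)) * δ⁻¹ := by
        have hC1 : ‖C (L + n)‖ ≤ ‖C 0‖ + S + 1 := (hCbd _).trans (by linarith)
        have hCnn : (0:ℝ) ≤ ‖C 0‖ + S + 1 := by have := norm_nonneg (C 0); linarith
        have hDnn : (0:ℝ) ≤ ∏ k ∈ Finset.range n, ‖D (L + k)‖ :=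
          Finset.prod_nonneg fun _ _ => norm_nonneg _
        exact mul_le_mul (mul_le_mul hC1 (key n) (norm_nonneg _) hCnn) (hinv L)
          (norm_nonneg _) (mul_nonneg hCnn (mul_nonneg hDnn (Real.exp_pos _).le))
    _ ≤ (‖C 0‖ + S + 1) * δ⁻¹ * Real.exp (δ⁻¹ * S) * ∏ k ∈ Finset.range n, ‖D (L + k)‖ := by
        have hexp : Real.exp (δ⁻¹ * ∑ k ∈ Finset.range n, ‖C (L + k + 1) - C (L + k)‖)
            ≤ Real.exp (δ⁻¹ * S) := by
          apply Real.exp_le_exp.mpr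
          gcongr
        have hDnn : (0:ℝ) ≤ ∏ k ∈ Finset.range n, ‖D (L + k)‖ :=
          Finset.prod_nonneg fun _ _ => norm_nonneg _
        have hCnn : (0:ℝ) ≤ ‖C 0‖ + S + 1 := by have := norm_nonneg (C 0); linarith
        calc (‖C 0‖ + S + 1) * ((∏ k ∈ Finset.range n, ‖D (L + k)‖) *
              Real.exp (δ⁻¹ * ∑ k ∈ Finset.range n, ‖C (L + k + 1) - C (L + k)‖)) * δ⁻¹
            ≤ (‖C 0‖ + S + 1) * ((∏ k ∈ Finset.range n, ‖D (L + k)‖) *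
              Real.exp (δ⁻¹ * S)) * δ⁻¹ := by gcongr
          _ = (‖C 0‖ + S + 1) * δ⁻¹ * Real.exp (δ⁻¹ * S) * ∏ k ∈ Finset.range n, ‖D (L + k)‖ := by
              ring
end
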